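/- Let p ≥ 1 and let (X, d, m) be a metric measure space whose measure m is β-doubling for some β > 1, with N = log β / log 2. Assume a ≤ θ_N^−(x) ≤ θ_N^+(x) ≤ b for all x ∈ X, for some constants b > a > 0. Then for every Lipschitz function u : X → ℝ with bounded support satisfying m({x : lip u(x) > 0}) > 0, one has 0 < liminf_{λ→+∞} λ^p · (m × m)(E_{λ,u}) and limsup_{λ→+∞} λ^p · (m × m)(E_{λ,u}) < +∞, where E_{λ,u} = {(x,y) ∈ X × X : x ≠ y, |u(x) − u(y)| ≥ λ · d(x,y)^{N/p + 1}}. -/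

import Mathlib

open MeasureTheory Filter Metric Set Topology

/-- The lower pointwise Lipschitz constant
`lip u (x) = liminf_{r → 0+} sup_{y ∈ B_r(x)} |u y - u x| / r`. -/
noncomputable def lipLower {X : Type*} [MetricSpace X] (u : X → ℝ) (x : X) : ℝ :=
  Filter.liminf (fun r : ℝ => ⨆ y ∈ Metric.ball x r, |u y - u x| / r) (𝓝[>] (0 : ℝ))

/-- The upper pointwise Lipschitz constant
`Lip u (x) = limsup_{r → 0+} sup_{y ∈ B_r(x)} |u y - u x| / r`. -/
noncomputable def lipUpper {X : Type*} [MetricSpace X] (u : X → ℝ) (x : X) : ℝ :=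
  Filter.limsup (fun r : ℝ => ⨆ y ∈ Metric.ball x r, |u y - u x| / r) (𝓝[>] (0 : ℝ))

/-- The set `E_{λ,u} = {(x,y) : x ≠ y, |u x - u y| ≥ λ d(x,y)^{N/p+1}}`. -/
def BVYset {X : Type*} [MetricSpace X] (u : X → ℝ) (N p lam : ℝ) : Set (X × X) :=
  {q : X × X | q.1 ≠ q.2 ∧ lam * dist q.1 q.2 ^ (N / p + 1) ≤ |u q.1 - u q.2|}

/-!
Upper bound: if `u` is `L`-Lipschitz, every `(x, y) ∈ E_{λ,u}` has `d(x,y) ≤ δ := (L/λ)^{p/N}`,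
and `x` or `y` lies in the support of `u`. Doubling with `β = 2^N` makes `μ(B(x,r)) / r^N`
nondecreasing along the dyadic scales `2^{-n} δ`, so the upper density bound gives
`μ(B(x,r)) ≤ b r^N` at every scale. By Fubini, `(μ × μ)(E_{λ,u})` is at most `b (2δ)^N` times the
measure of a bounded neighbourhood of the support, while `λ^p δ^N = L^p`.

Lower bound: on some set `G` of positive measure, uniformly at every scale `r < ε`, there is
`y ∈ B(x,r)` with `|u y - u x| > L₀ r`, and `μ(B(x,r)) ≥ (a/2) r^N`. When `λ r^{N/p}` is a small
fixed multiple of `L₀`, the section of `E_{λ,u}` at `x ∈ G` contains `B(y, L₀ r / (2L))`, whose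
measure is at least `β^{-j} μ(B(x,r))` for a `j` depending only on `L / L₀`. Integrating over `G`
gives `(μ × μ)(E_{λ,u}) ≳ r^N`, and `λ^p r^N` is a positive constant.
-/
open scoped ENNReal NNReal

def IsDoublingWith {X : Type*} [MetricSpace X] [MeasurableSpace X] (μ : Measure X) (β : ℝ) :
    Prop :=
  ∀ (x : X) (r : ℝ), 0 < r → μ (ball x (2 * r)) ≤ ENNReal.ofReal β * μ (ball x r)

section Doubling

variable {X : Type*} [MetricSpace X] [MeasurableSpace X] {μ : Measure X} {β : ℝ}

lemma IsDoublingWith.measure_ball_two_pow_mul_le (hdbl : IsDoublingWith μ β) (x : X) {r : ℝ}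
    (hr : 0 < r) (n : ℕ) :
    μ (ball x (2 ^ n * r)) ≤ ENNReal.ofReal β ^ n * μ (ball x r) := by
  induction n with
  | zero => simp
  | succ n ih =>
    calc μ (ball x (2 ^ (n + 1) * r)) = μ (ball x (2 * (2 ^ n * r))) := by ring_nf
      _ ≤ ENNReal.ofReal β * μ (ball x (2 ^ n * r)) := hdbl x _ (by positivity)
      _ ≤ ENNReal.ofReal β * (ENNReal.ofReal β ^ n * μ (ball x r)) := by gcongr
      _ = ENNReal.ofReal β ^ (n + 1) * μ (ball x r) := by ring

lemma IsDoublingWith.measure_ball_le_pow_mul_measure_ball (hdbl : IsDoublingWith μ β)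
    {x y : X} {R r : ℝ} {j : ℕ} (hr : 0 < r) (h : dist x y + R ≤ 2 ^ j * r) :
    μ (ball x R) ≤ ENNReal.ofReal β ^ j * μ (ball y r) := by
  refine (measure_mono fun z hz => ?_).trans (hdbl.measure_ball_two_pow_mul_le y hr j)
  rw [mem_ball] at hz ⊢
  linarith [dist_triangle z x y]

lemma IsDoublingWith.measure_ball_two_pow_mul_div_le {N : ℝ} (hdbl : IsDoublingWith μ β)
    (h2N : (2 : ℝ) ^ N = β) (x : X) {r : ℝ} (hr : 0 < r) (n : ℕ) :
    μ (ball x (2 ^ n * r)) / ENNReal.ofReal ((2 ^ n * r) ^ N)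
      ≤ μ (ball x r) / ENNReal.ofReal (r ^ N) := by
  have hβ : 0 < β := h2N ▸ by positivity
  have hβn : ENNReal.ofReal β ^ n ≠ 0 := pow_ne_zero n (ENNReal.ofReal_pos.2 hβ).ne'
  have hscale : ENNReal.ofReal ((2 ^ n * r) ^ N)
      = ENNReal.ofReal β ^ n * ENNReal.ofReal (r ^ N) := by
    have h2nN : ((2 : ℝ) ^ n) ^ N = β ^ n := by
      rw [← Real.rpow_natCast, ← Real.rpow_mul zero_le_two, mul_comm, Real.rpow_mul zero_le_two,
        h2N, Real.rpow_natCast]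
    rw [Real.mul_rpow (by positivity) hr.le, h2nN, ENNReal.ofReal_mul (by positivity),
      ENNReal.ofReal_pow hβ.le]
  calc μ (ball x (2 ^ n * r)) / ENNReal.ofReal ((2 ^ n * r) ^ N)
      ≤ ENNReal.ofReal β ^ n * μ (ball x r)
          / (ENNReal.ofReal β ^ n * ENNReal.ofReal (r ^ N)) := by
        rw [hscale]
        gcongr
        exact hdbl.measure_ball_two_pow_mul_le x hr n
    _ = μ (ball x r) / ENNReal.ofReal (r ^ N) :=
        ENNReal.mul_div_mul_left _ _ hβn (ENNReal.pow_ne_top ENNReal.ofReal_ne_top)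

lemma IsDoublingWith.measure_ball_le_of_limsup_le {N b : ℝ} (hdbl : IsDoublingWith μ β)
    (h2N : (2 : ℝ) ^ N = β) {x : X}
    (hθ : limsup (fun r : ℝ => μ (ball x r) / ENNReal.ofReal (r ^ N)) (𝓝[>] 0)
      ≤ ENNReal.ofReal b) {δ : ℝ} (hδ : 0 < δ) :
    μ (ball x δ) ≤ ENNReal.ofReal b * ENNReal.ofReal (δ ^ N) := by
  have hdyadic : Tendsto (fun n : ℕ => δ / 2 ^ n) atTop (𝓝[>] 0) := by
    refine tendsto_nhdsWithin_of_tendsto_nhds_of_eventually_within _ ?_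
      (Eventually.of_forall fun n => mem_Ioi.2 (by positivity))
    simpa [div_eq_mul_inv] using
      (tendsto_pow_atTop_nhds_zero_of_lt_one (by norm_num : (0 : ℝ) ≤ 2⁻¹)
        (by norm_num)).const_mul δ
  have hle : ∀ n : ℕ, μ (ball x δ) / ENNReal.ofReal (δ ^ N)
      ≤ μ (ball x (δ / 2 ^ n)) / ENNReal.ofReal ((δ / 2 ^ n) ^ N) := fun n => by
    simpa [mul_div_cancel₀ δ (pow_ne_zero n two_ne_zero)] using
      hdbl.measure_ball_two_pow_mul_div_le h2N x (r := δ / 2 ^ n) (by positivity) n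
  have hratio := (le_limsup_of_frequently_le
    (hdyadic.frequently (Frequently.of_forall hle))).trans hθ
  rwa [ENNReal.div_le_iff (ENNReal.ofReal_pos.2 (by positivity)).ne' ENNReal.ofReal_ne_top]
    at hratio

lemma IsDoublingWith.measure_lt_top_of_isBounded {N b : ℝ} (hdbl : IsDoublingWith μ β)
    (h2N : (2 : ℝ) ^ N = β)
    (hθ : ∀ x : X, limsup (fun r : ℝ => μ (ball x r) / ENNReal.ofReal (r ^ N)) (𝓝[>] 0)
      ≤ ENNReal.ofReal b) {s : Set X} (hs : Bornology.IsBounded s) :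
    μ s < ⊤ := by
  rcases s.eq_empty_or_nonempty with rfl | ⟨x, -⟩
  · simp
  obtain ⟨R, hR, hsR⟩ := hs.subset_ball_lt 0 x
  refine (measure_mono hsR).trans_lt ?_
  exact (hdbl.measure_ball_le_of_limsup_le h2N (hθ x) hR).trans_lt
    (ENNReal.mul_lt_top ENNReal.ofReal_lt_top ENNReal.ofReal_lt_top)

end Doubling

section ProductMeasure

variable {X Y : Type*} [MeasurableSpace X] [MeasurableSpace Y] {μ : Measure X} {ν : Measure Y}
  [SFinite ν] {E : Set (X × Y)}

/-- `T` need not be measurable: Markov's inequality for the measurable function `x ↦ ν (E_x)`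
stands in for integrating over `T`. -/
lemma mul_measure_le_prod_of_le_measure_preimage_mk (hE : MeasurableSet E) {T : Set X}
    {C : ℝ≥0∞} (hC : ∀ x ∈ T, C ≤ ν (Prod.mk x ⁻¹' E)) :
    C * μ T ≤ μ.prod ν E := by
  rw [Measure.prod_apply hE]
  calc C * μ T ≤ C * μ {x | C ≤ ν (Prod.mk x ⁻¹' E)} := by gcongr; exact hC
    _ ≤ ∫⁻ x, ν (Prod.mk x ⁻¹' E) ∂μ :=
      mul_meas_ge_le_lintegral₀ (measurable_measure_prodMk_left hE).aemeasurable C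

lemma prod_le_mul_measure_of_measure_preimage_mk_le (hE : MeasurableSet E) {s : Set X}
    (hEs : ∀ q ∈ E, q.1 ∈ s) {C : ℝ≥0∞} (hC : ∀ x ∈ s, ν (Prod.mk x ⁻¹' E) ≤ C) :
    μ.prod ν E ≤ C * μ s := by
  rw [Measure.prod_apply hE]
  refine (lintegral_mono fun x => ?_).trans (lintegral_indicator_const_le s C)
  by_cases hx : x ∈ s
  · simpa [hx] using hC x hx
  · simp only [indicator_of_notMem hx, nonpos_iff_eq_zero]
    exact measure_mono_null (fun y hy => hx (hEs (x, y) hy)) measure_empty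

end ProductMeasure

section Oscillation

variable {X : Type*} [MetricSpace X] {u : X → ℝ} {N p lam : ℝ}

lemma measurableSet_BVYset [MeasurableSpace X] [OpensMeasurableSpace X]
    [SecondCountableTopology X] (hu : Continuous u) (he : 0 ≤ N / p + 1) :
    MeasurableSet (BVYset u N p lam) := by
  change MeasurableSet ({q : X × X | q.1 ≠ q.2}
    ∩ {q | lam * dist q.1 q.2 ^ (N / p + 1) ≤ |u q.1 - u q.2|})
  refine (isOpen_ne_fun continuous_fst continuous_snd).measurableSet.inter
    (isClosed_le ?_ ?_).measurableSet
  · exact continuous_const.mul (continuous_dist.rpow_const fun _ => Or.inr he)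
  · exact ((hu.comp continuous_fst).sub (hu.comp continuous_snd)).abs

lemma dist_le_of_mem_BVYset {L : ℝ≥0} (hL : LipschitzWith L u) (hN : 0 < N) (hp : 0 < p)
    (hlam : 0 < lam) {q : X × X} (hq : q ∈ BVYset u N p lam) :
    dist q.1 q.2 ≤ (L / lam) ^ (p / N) := by
  obtain ⟨hne, hle⟩ := hq
  have hd : 0 < dist q.1 q.2 := dist_pos.2 hne
  have hdN : lam * dist q.1 q.2 ^ (N / p) * dist q.1 q.2 ≤ L * dist q.1 q.2 := by
    calc lam * dist q.1 q.2 ^ (N / p) * dist q.1 q.2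
        = lam * dist q.1 q.2 ^ (N / p + 1) := by rw [Real.rpow_add hd, Real.rpow_one, mul_assoc]
      _ ≤ |u q.1 - u q.2| := hle
      _ ≤ L * dist q.1 q.2 := by simpa [Real.dist_eq] using hL.dist_le_mul q.1 q.2
  rw [← inv_div N p, Real.le_rpow_inv_iff_of_pos hd.le (by positivity) (by positivity),
    le_div_iff₀ hlam, mul_comm]
  exact le_of_mul_le_mul_right hdN hd

lemma LipschitzWith.lt_of_mul_lt_abs_sub {L : ℝ≥0} (hL : LipschitzWith L u) {x y : X}
    {L₀ r : ℝ} (hxy : dist x y < r) (hosc : L₀ * r < |u y - u x|) :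
    L₀ < L := by
  have hlip : |u y - u x| ≤ L * dist x y := by
    simpa [Real.dist_eq, dist_comm, abs_sub_comm] using hL.dist_le_mul y x
  have hr : 0 < r := dist_nonneg.trans_lt hxy
  refine lt_of_mul_lt_mul_right ?_ hr.le
  calc L₀ * r < L * dist x y := hosc.trans_le hlip
    _ ≤ L * r := by gcongr

lemma ball_subset_preimage_mk_BVYset {L : ℝ≥0} (hL : LipschitzWith L u) {x y : X}
    {L₀ r : ℝ} (hL₀ : 0 < L₀) (hxy : dist x y < r) (hosc : L₀ * r < |u y - u x|)
    (hlam : 0 ≤ lam) (he : 0 ≤ N / p + 1)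
    (hscale : lam * (2 * r) ^ (N / p + 1) ≤ L₀ / 2 * r) :
    ball y (L₀ / (2 * L) * r) ⊆ Prod.mk x ⁻¹' BVYset u N p lam := by
  have hLL₀ := hL.lt_of_mul_lt_abs_sub hxy hosc
  have hL0 : (0 : ℝ) < L := hL₀.trans hLL₀
  have hr : 0 < r := dist_nonneg.trans_lt hxy
  have hLs : L * (L₀ / (2 * L) * r) = L₀ / 2 * r := by field_simp
  have hsr : L₀ / (2 * L) * r ≤ r := by
    rw [div_mul_eq_mul_div, div_le_iff₀ (by positivity)]
    nlinarith
  intro w hw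
  rw [mem_ball] at hw
  have hwy : |u w - u y| ≤ L₀ / 2 * r := by
    calc |u w - u y| ≤ L * dist w y := by simpa [Real.dist_eq] using hL.dist_le_mul w y
      _ ≤ L * (L₀ / (2 * L) * r) := by gcongr
      _ = L₀ / 2 * r := hLs
  have hwx : L₀ / 2 * r < |u x - u w| := by
    rw [abs_sub_comm]
    linarith [abs_sub_le (u y) (u w) (u x), abs_sub_comm (u y) (u w)]
  have hxw : dist x w ≤ 2 * r := by linarith [dist_triangle x y w, dist_comm w y]
  refine ⟨fun hxw' => ?_, ?_⟩
  · rw [show x = w from hxw', sub_self, abs_zero] at hwx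
    linarith [mul_pos hL₀ hr]
  · calc lam * dist x w ^ (N / p + 1) ≤ lam * (2 * r) ^ (N / p + 1) := by gcongr
      _ ≤ L₀ / 2 * r := hscale
      _ ≤ |u x - u w| := hwx.le

lemma eventually_exists_mul_lt_abs_sub_of_lt_lipLower {x : X} {L₀ : ℝ} (hL₀ : 0 ≤ L₀)
    (h : L₀ < lipLower u x) :
    ∀ᶠ r in 𝓝[>] 0, ∃ y, dist x y < r ∧ L₀ * r < |u y - u x| := by
  have : Nonempty X := ⟨x⟩
  have hbdd : IsBoundedUnder (· ≥ ·) (𝓝[>] 0)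
      (fun r : ℝ => ⨆ y ∈ ball x r, |u y - u x| / r) := by
    refine isBoundedUnder_of_eventually_ge (a := 0) ?_
    filter_upwards [self_mem_nhdsWithin] with r (hr : 0 < r)
    exact Real.iSup_nonneg fun y => Real.iSup_nonneg fun _ => by positivity
  filter_upwards [eventually_lt_of_lt_liminf h hbdd, self_mem_nhdsWithin]
    with r hlt (hr : 0 < r)
  obtain ⟨y, hy⟩ := exists_lt_of_lt_ciSup hlt
  by_cases hyx : y ∈ ball x r
  · rw [ciSup_pos hyx, lt_div_iff₀ hr] at hy
    exact ⟨y, by rwa [dist_comm, ← mem_ball], hy⟩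
  · rw [ciSup_neg hyx, Real.sSup_empty] at hy
    exact absurd hL₀ hy.not_ge

end Oscillation

section LowerBound

variable {X : Type*} [MetricSpace X] [MeasurableSpace X] {μ : Measure X} {u : X → ℝ} {N : ℝ}

lemma eventually_mul_rpow_le_measure_ball {x : X} {c : ℝ≥0∞}
    (h : c < liminf (fun r : ℝ => μ (ball x r) / ENNReal.ofReal (r ^ N)) (𝓝[>] 0)) :
    ∀ᶠ r in 𝓝[>] 0, c * ENNReal.ofReal (r ^ N) ≤ μ (ball x r) := by
  filter_upwards [eventually_lt_of_lt_liminf h, self_mem_nhdsWithin] with r hlt (hr : 0 < r)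
  exact ((ENNReal.lt_div_iff_mul_lt
    (Or.inl (ENNReal.ofReal_pos.2 (Real.rpow_pos_of_pos hr N)).ne')
    (Or.inl ENNReal.ofReal_ne_top)).1 hlt).le

def uniformScaleSet (μ : Measure X) (u : X → ℝ) (N L₀ : ℝ) (c : ℝ≥0∞) (ε : ℝ) : Set X :=
  {x | ∀ r ∈ Ioo 0 ε,
    (∃ y, dist x y < r ∧ L₀ * r < |u y - u x|) ∧ c * ENNReal.ofReal (r ^ N) ≤ μ (ball x r)}

lemma exists_pos_measure_uniformScaleSet {a : ℝ} (ha : 0 < a)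
    (hθ : ∀ x : X, ENNReal.ofReal a
      ≤ liminf (fun r : ℝ => μ (ball x r) / ENNReal.ofReal (r ^ N)) (𝓝[>] 0))
    (hpos : 0 < μ {x | 0 < lipLower u x}) :
    ∃ L₀ > 0, ∃ ε > 0, 0 < μ (uniformScaleSet μ u N L₀ (ENNReal.ofReal (a / 2)) ε) := by
  have hcover : {x | 0 < lipLower u x} ⊆ ⋃ (n : ℕ) (k : ℕ),
      uniformScaleSet μ u N (1 / (n + 1)) (ENNReal.ofReal (a / 2)) (1 / (k + 1)) := by
    intro x (hx : 0 < lipLower u x)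
    obtain ⟨n, hn⟩ := exists_nat_one_div_lt hx
    have hdens : ENNReal.ofReal (a / 2) < ENNReal.ofReal a :=
      (ENNReal.ofReal_lt_ofReal_iff ha).2 (half_lt_self ha)
    have hev := (eventually_exists_mul_lt_abs_sub_of_lt_lipLower (by positivity) hn).and
      (eventually_mul_rpow_le_measure_ball (hdens.trans_le (hθ x)))
    obtain ⟨ε, hε, hsub⟩ := mem_nhdsGT_iff_exists_Ioo_subset.1 hev
    obtain ⟨k, hk⟩ := exists_nat_one_div_lt (show (0 : ℝ) < ε from hε)
    exact mem_iUnion₂.2 ⟨n, k, fun r hr => hsub ⟨hr.1, hr.2.trans hk⟩⟩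
  by_contra! h
  refine hpos.ne' (measure_mono_null hcover
    (measure_iUnion_null fun n => measure_iUnion_null fun k => ?_))
  exact nonpos_iff_eq_zero.1 (h _ Nat.one_div_pos_of_nat _ Nat.one_div_pos_of_nat)

end LowerBound

lemma rpow_mul_rpow_div_rpow_div {κ lam s t : ℝ} (hκ : 0 ≤ κ) (hlam : 0 < lam) (hs : s ≠ 0) :
    lam ^ t * ((κ / lam) ^ (t / s)) ^ s = κ ^ t := by
  rw [← Real.rpow_mul (by positivity), div_mul_cancel₀ t hs, Real.div_rpow hκ hlam.le,
    mul_div_cancel₀ _ (by positivity)]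

section Asymptotics

variable {X : Type*} [MetricSpace X] [MeasurableSpace X] [OpensMeasurableSpace X]
  [SecondCountableTopology X] {μ : Measure X} [SFinite μ] {u : X → ℝ} {N p β : ℝ} {L : ℝ≥0}

lemma mul_measure_uniformScaleSet_le_measure_prod_BVYset (hdbl : IsDoublingWith μ β)
    (hL : LipschitzWith L u) {L₀ ε r lam : ℝ} {c : ℝ≥0∞} {j : ℕ} (hL₀ : 0 < L₀)
    (hj : 4 * L ≤ 2 ^ j * L₀) (hr : r ∈ Ioo 0 ε) (hlam : 0 ≤ lam) (he : 0 ≤ N / p + 1)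
    (hscale : lam * (2 * r) ^ (N / p + 1) ≤ L₀ / 2 * r) :
    c * ENNReal.ofReal (r ^ N) / ENNReal.ofReal β ^ j * μ (uniformScaleSet μ u N L₀ c ε)
      ≤ μ.prod μ (BVYset u N p lam) := by
  refine mul_measure_le_prod_of_le_measure_preimage_mk
    (measurableSet_BVYset hL.continuous he) fun x hx => ?_
  have hr0 : 0 < r := hr.1
  obtain ⟨⟨y, hxy, hosc⟩, hmass⟩ := hx r hr
  have hL0 : (0 : ℝ) < L := hL₀.trans (hL.lt_of_mul_lt_abs_sub hxy hosc)
  have hdist : dist x y + r ≤ 2 ^ j * (L₀ / (2 * L) * r) := by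
    calc dist x y + r ≤ 4 * L / (2 * L) * r := by
          rw [show 4 * (L : ℝ) / (2 * L) = 2 by field_simp; norm_num]
          linarith
      _ ≤ 2 ^ j * L₀ / (2 * L) * r := by gcongr
      _ = 2 ^ j * (L₀ / (2 * L) * r) := by ring
  refine ENNReal.div_le_of_le_mul' (hmass.trans ?_)
  calc μ (ball x r) ≤ ENNReal.ofReal β ^ j * μ (ball y (L₀ / (2 * L) * r)) :=
        hdbl.measure_ball_le_pow_mul_measure_ball (by positivity) hdist
    _ ≤ ENNReal.ofReal β ^ j * μ (Prod.mk x ⁻¹' BVYset u N p lam) := by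
        gcongr
        exact ball_subset_preimage_mk_BVYset hL hL₀ hxy hosc hlam he hscale

lemma liminf_rpow_mul_measure_prod_BVYset_pos (hdbl : IsDoublingWith μ β) (hN : 0 < N)
    (hp : 0 < p) {a : ℝ} (ha : 0 < a)
    (hθ : ∀ x : X, ENNReal.ofReal a
      ≤ liminf (fun r : ℝ => μ (ball x r) / ENNReal.ofReal (r ^ N)) (𝓝[>] 0))
    (hL : LipschitzWith L u) (hpos : 0 < μ {x | 0 < lipLower u x}) :
    0 < liminf (fun lam : ℝ => ENNReal.ofReal (lam ^ p) * μ.prod μ (BVYset u N p lam))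
      atTop := by
  obtain ⟨L₀, hL₀, ε, hε, hG⟩ := exists_pos_measure_uniformScaleSet ha hθ hpos
  set G := uniformScaleSet μ u N L₀ (ENNReal.ofReal (a / 2)) ε
  obtain ⟨j, hj⟩ := pow_unbounded_of_one_lt (4 * L / L₀) one_lt_two
  have he : 0 ≤ N / p + 1 := by positivity
  -- At the scale `r` with `λ r ^ (N / p) = κ`, one has `λ (2r)^{N/p+1} = L₀ r / 2`.
  set κ : ℝ := L₀ / (4 * 2 ^ (N / p))
  have hκ : 0 < κ := by positivity
  have hC :
      0 < ENNReal.ofReal (a / 2) * ENNReal.ofReal (κ ^ p) / ENNReal.ofReal β ^ j * μ G := by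
    have ha2 : 0 < ENNReal.ofReal (a / 2) := ENNReal.ofReal_pos.2 (by positivity)
    have hκp : 0 < ENNReal.ofReal (κ ^ p) := ENNReal.ofReal_pos.2 (by positivity)
    exact ENNReal.mul_pos (ENNReal.div_pos (ENNReal.mul_pos ha2.ne' hκp.ne').ne'
      (ENNReal.pow_ne_top ENNReal.ofReal_ne_top)).ne' hG.ne'
  refine hC.trans_le (le_liminf_of_le (by isBoundedDefault) ?_)
  filter_upwards [eventually_gt_atTop (κ / ε ^ (N / p))] with lam hlam
  have hlam0 : 0 < lam := (by positivity : 0 < κ / ε ^ (N / p)).trans hlam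
  set r := (κ / lam) ^ (p / N)
  have hr0 : 0 < r := by positivity
  have hlr : lam * r ^ (N / p) = κ := by
    simpa [one_div_div] using rpow_mul_rpow_div_rpow_div (t := 1) hκ.le hlam0 (s := N / p)
      (by positivity)
  have hrε : r < ε := by
    refine (Real.rpow_lt_rpow_iff hr0.le hε.le (by positivity : 0 < N / p)).1 ?_
    rw [show r ^ (N / p) = κ / lam by rw [eq_div_iff hlam0.ne', mul_comm, hlr],
      div_lt_iff₀ hlam0, mul_comm]
    exact (div_lt_iff₀ (by positivity)).1 hlam
  have hscale : lam * (2 * r) ^ (N / p + 1) = L₀ / 2 * r := by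
    rw [Real.mul_rpow zero_le_two hr0.le, Real.rpow_add two_pos, Real.rpow_add hr0,
      Real.rpow_one, Real.rpow_one]
    calc lam * (2 ^ (N / p) * 2 * (r ^ (N / p) * r))
        = 2 * 2 ^ (N / p) * r * (lam * r ^ (N / p)) := by ring
      _ = L₀ / 2 * r := by rw [hlr]; simp only [κ]; field_simp; ring
  have hmass :=
    mul_measure_uniformScaleSet_le_measure_prod_BVYset (c := ENNReal.ofReal (a / 2)) hdbl hL hL₀
      ((div_lt_iff₀ hL₀).1 hj).le ⟨hr0, hrε⟩ hlam0.le he hscale.le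
  calc ENNReal.ofReal (a / 2) * ENNReal.ofReal (κ ^ p) / ENNReal.ofReal β ^ j * μ G
      = ENNReal.ofReal (lam ^ p)
          * (ENNReal.ofReal (a / 2) * ENNReal.ofReal (r ^ N) / ENNReal.ofReal β ^ j * μ G) := by
        have hκp : lam ^ p * r ^ N = κ ^ p := rpow_mul_rpow_div_rpow_div hκ.le hlam0 hN.ne'
        rw [← hκp, ENNReal.ofReal_mul (by positivity)]
        simp only [div_eq_mul_inv]
        ring
    _ ≤ ENNReal.ofReal (lam ^ p) * μ.prod μ (BVYset u N p lam) := by gcongr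

lemma limsup_rpow_mul_measure_prod_BVYset_lt_top (hdbl : IsDoublingWith μ β)
    (h2N : (2 : ℝ) ^ N = β) (hN : 0 < N) (hp : 0 < p) {b : ℝ}
    (hθ : ∀ x : X, limsup (fun r : ℝ => μ (ball x r) / ENNReal.ofReal (r ^ N)) (𝓝[>] 0)
      ≤ ENNReal.ofReal b)
    (hL : LipschitzWith L u) (hsupp : Bornology.IsBounded (Function.support u)) :
    limsup (fun lam : ℝ => ENNReal.ofReal (lam ^ p) * μ.prod μ (BVYset u N p lam))
      atTop < ⊤ := by
  wlog hL0 : 0 < L generalizing L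
  · exact this (hL.weaken (le_add_of_nonneg_right zero_le_one)) (by positivity)
  set s := thickening 2 (Function.support u)
  have hs : μ s < ⊤ := hdbl.measure_lt_top_of_isBounded h2N hθ hsupp.thickening
  have he : 0 ≤ N / p + 1 := by positivity
  have hC : ENNReal.ofReal b * ENNReal.ofReal (2 ^ N * L ^ p) * μ s < ⊤ :=
    ENNReal.mul_lt_top (ENNReal.mul_lt_top ENNReal.ofReal_lt_top ENNReal.ofReal_lt_top) hs
  refine (limsup_le_of_le (by isBoundedDefault) ?_).trans_lt hC
  filter_upwards [eventually_ge_atTop (L : ℝ)] with lam hlam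
  have hlam0 : 0 < lam := (NNReal.coe_pos.2 hL0).trans_le hlam
  set δ := (L / lam) ^ (p / N)
  have hδ0 : 0 < δ := by positivity
  have hδ1 : δ ≤ 1 :=
    Real.rpow_le_one (by positivity) (div_le_one_of_le₀ hlam hlam0.le) (by positivity)
  have hclose : ∀ q ∈ BVYset u N p lam, dist q.1 q.2 ≤ δ :=
    fun q hq => dist_le_of_mem_BVYset hL hN hp hlam0 hq
  have hbound : μ.prod μ (BVYset u N p lam)
      ≤ ENNReal.ofReal b * ENNReal.ofReal ((2 * δ) ^ N) * μ s := by
    refine prod_le_mul_measure_of_measure_preimage_mk_le (measurableSet_BVYset hL.continuous he)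
      (fun q hq => ?_) (fun x _ => ?_)
    · have hosc : 0 < |u q.1 - u q.2| :=
        (mul_pos hlam0 (Real.rpow_pos_of_pos (dist_pos.2 hq.1) _)).trans_le hq.2
      by_cases h1 : u q.1 = 0
      · have h2 : u q.2 ≠ 0 := fun h2 => by simp [h1, h2] at hosc
        exact mem_thickening_iff.2 ⟨q.2, h2, by linarith [hclose q hq]⟩
      · exact self_subset_thickening two_pos _ h1
    · refine (measure_mono fun y hy => ?_).trans
        (hdbl.measure_ball_le_of_limsup_le h2N (hθ x) (by positivity))
      rw [mem_ball, dist_comm]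
      linarith [hclose (x, y) hy]
  have hscale : lam ^ p * (2 * δ) ^ N = 2 ^ N * L ^ p := by
    rw [Real.mul_rpow zero_le_two hδ0.le, mul_left_comm,
      rpow_mul_rpow_div_rpow_div (by positivity) hlam0 hN.ne']
  calc ENNReal.ofReal (lam ^ p) * μ.prod μ (BVYset u N p lam)
      ≤ ENNReal.ofReal (lam ^ p)
          * (ENNReal.ofReal b * ENNReal.ofReal ((2 * δ) ^ N) * μ s) := by gcongr
    _ = ENNReal.ofReal b * ENNReal.ofReal (2 ^ N * L ^ p) * μ s := by
        rw [← hscale, ENNReal.ofReal_mul (by positivity)]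
        ring

end Asymptotics

theorem liminf_pos_and_limsup_lt_top_general
    {X : Type*} [MetricSpace X] [TopologicalSpace.SeparableSpace X]
    [MeasurableSpace X] [BorelSpace X]
    (μ : Measure X) [SigmaFinite μ]
    (p β : ℝ) (hp : 1 ≤ p) (hβ : 1 < β)
    (hdbl : ∀ (x : X) (r : ℝ), 0 < r →
      μ (Metric.ball x (2 * r)) ≤ ENNReal.ofReal β * μ (Metric.ball x r))
    (N : ℝ) (hN : N = Real.log β / Real.log 2)
    (a b : ℝ) (ha : 0 < a)
    (hθlow : ∀ x : X,
      ENNReal.ofReal a ≤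
        Filter.liminf (fun r : ℝ => μ (Metric.ball x r) / ENNReal.ofReal (r ^ N)) (𝓝[>] (0 : ℝ)))
    (hθup : ∀ x : X,
      Filter.limsup (fun r : ℝ => μ (Metric.ball x r) / ENNReal.ofReal (r ^ N)) (𝓝[>] (0 : ℝ))
        ≤ ENNReal.ofReal b)
    (u : X → ℝ) (hu : ∃ L : NNReal, LipschitzWith L u)
    (hsupp : Bornology.IsBounded (Function.support u))
    (hpos : 0 < μ {x : X | 0 < lipLower u x}) :
    0 < Filter.liminf
        (fun lam : ℝ => ENNReal.ofReal (lam ^ p) * (μ.prod μ) (BVYset u N p lam))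
        Filter.atTop
    ∧ Filter.limsup
        (fun lam : ℝ => ENNReal.ofReal (lam ^ p) * (μ.prod μ) (BVYset u N p lam))
        Filter.atTop < ⊤ := by
  obtain ⟨L, hL⟩ := hu
  rw [Real.log_div_log] at hN
  have hN0 : 0 < N := hN ▸ Real.logb_pos one_lt_two hβ
  have h2N : (2 : ℝ) ^ N = β := hN ▸ Real.rpow_logb two_pos (by norm_num) (by linarith)
  have hp0 : 0 < p := by linarith
  exact ⟨liminf_rpow_mul_measure_prod_BVYset_pos hdbl hN0 hp0 ha hθlow hL hpos,
    limsup_rpow_mul_measure_prod_BVYset_lt_top hdbl h2N hN0 hp0 hθup hL hsupp⟩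

theorem liminf_pos_and_limsup_lt_top
    {X : Type*} [MetricSpace X] [CompleteSpace X] [TopologicalSpace.SeparableSpace X]
    [MeasurableSpace X] [BorelSpace X]
    (μ : Measure X) [SigmaFinite μ] [IsLocallyFiniteMeasure μ] [μ.InnerRegular]
    [μ.IsOpenPosMeasure]
    (p β : ℝ) (hp : 1 ≤ p) (hβ : 1 < β)
    (hdbl : ∀ (x : X) (r : ℝ), 0 < r →
      μ (Metric.ball x (2 * r)) ≤ ENNReal.ofReal β * μ (Metric.ball x r))
    (N : ℝ) (hN : N = Real.log β / Real.log 2)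
    (a b : ℝ) (ha : 0 < a) (hab : a < b)
    (hθlow : ∀ x : X,
      ENNReal.ofReal a ≤
        Filter.liminf (fun r : ℝ => μ (Metric.ball x r) / ENNReal.ofReal (r ^ N)) (𝓝[>] (0 : ℝ)))
    (hθup : ∀ x : X,
      Filter.limsup (fun r : ℝ => μ (Metric.ball x r) / ENNReal.ofReal (r ^ N)) (𝓝[>] (0 : ℝ))
        ≤ ENNReal.ofReal b)
    (u : X → ℝ) (hu : ∃ L : NNReal, LipschitzWith L u)
    (hsupp : Bornology.IsBounded (Function.support u))
    (hpos : 0 < μ {x : X | 0 < lipLower u x}) :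
    0 < Filter.liminf
        (fun lam : ℝ => ENNReal.ofReal (lam ^ p) * (μ.prod μ) (BVYset u N p lam))
        Filter.atTop
    ∧ Filter.limsup
        (fun lam : ℝ => ENNReal.ofReal (lam ^ p) * (μ.prod μ) (BVYset u N p lam))
        Filter.atTop < ⊤ :=
  liminf_pos_and_limsup_lt_top_general μ p β hp hβ hdbl N hN a b ha hθlow hθup u hu hsupp hpos
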